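/- arXiv:1703.00840 — 6 statements merged into one kernel-verified Lean document; each statement's English description precedes it below -/
import Mathlib

section
/- Let a > 0 be a real number and let V ∈ ℝ[[X]] be a formal power series whose coefficients in degrees 0, 1 and 2 all vanish, and set S := −X²/(2a) + V ∈ ℝ[[X]]. Then there exists exactly one formal power series x ∈ ℝ[[Y]] with zero constant coefficient and strictly positive coefficient of Y such that −2·S(x) = Y² holds in ℝ[[Y]], where S(x) denotes the substitution of x into S (well defined since x has zero constant coefficient). Moreover, the coefficient of Y in this unique solution x equals √a. -/
/-!
Write `x = ∑ xₖ Yᵏ` with `x₀ = 0`. Since `V` has order at least `3`, the coefficient of `Y²`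
in `-2 S(x)` is `x₁² / a`, which forces `x₁ = √a`. For `n ≥ 0` the coefficient of `Y^{n+3}`
in `S(x)` is `-x₁ x_{n+2} / a` plus a polynomial in `x₁, …, x_{n+1}`: the top coefficient
`x_{n+2}` enters only through `x²`, and only linearly. So the equation is a recursion
determining each coefficient from the previous ones, and such a recursion has exactly one
solution.
-/

/-- Composition (substitution) of formal power series: `substPS g f` is `f(g)`,
the usual composition when `g` has zero constant coefficient
(the coefficient of `X^n` in `f(g)` is `∑_{k=0}^{n} [X^k]f · [X^n](g^k)`). -/
noncomputable def substPS (g f : PowerSeries ℝ) : PowerSeries ℝ :=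
  PowerSeries.mk fun n => ∑ k ∈ Finset.range (n + 1),
    PowerSeries.coeff k f * PowerSeries.coeff n (g ^ k)

open PowerSeries Finset


namespace PowerSeries

theorem existsUnique_forall_coeff_eq {R : Type*} [Semiring R] (G : ℕ → R⟦X⟧ → R)
    (hG : ∀ m x y, (∀ i < m, coeff i x = coeff i y) → G m x = G m y) :
    ∃! x : R⟦X⟧, ∀ m, coeff m x = G m x := by
  let c : ℕ → R := Nat.strongRec fun m c' => G m (mk fun i => if h : i < m then c' i h else 0)
  have hc : ∀ m, coeff m (mk c) = G m (mk c) := by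
    intro m
    rw [coeff_mk]
    unfold c
    rw [Nat.strongRec_eq]
    exact hG m _ _ fun i hi => by simp [hi]
  refine ⟨mk c, hc, fun y hy => ext fun m => ?_⟩
  induction m using Nat.strong_induction_on with
  | _ m ih => rw [hy, hc]; exact hG m y (mk c) ih

variable {R : Type*} [CommRing R]

theorem X_pow_dvd_pow_sub_pow {x y : R⟦X⟧} (hx : X ∣ x) (hy : X ∣ y) {m : ℕ}
    (h : X ^ (m + 1) ∣ x - y) (k : ℕ) : X ^ (m + k) ∣ x ^ k - y ^ k := by
  induction k with
  | zero => simp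
  | succ k ih =>
    have hsplit : x ^ (k + 1) - y ^ (k + 1) = x ^ k * (x - y) + (x ^ k - y ^ k) * y := by ring
    rw [hsplit]
    refine dvd_add ?_ ?_
    · rw [show m + (k + 1) = k + (m + 1) by omega, pow_add]
      exact mul_dvd_mul (pow_dvd_pow_of_dvd hx k) h
    · rw [← add_assoc, pow_succ]
      exact mul_dvd_mul ih hy

theorem coeff_two_sq {x : R⟦X⟧} (hx : constantCoeff x = 0) :
    coeff 2 (x ^ 2) = coeff 1 x ^ 2 := by
  simp [sq, coeff_mul, Finset.Nat.antidiagonal_succ, hx]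

theorem coeff_add_three_sq {x : R⟦X⟧} (hx : constantCoeff x = 0) (n : ℕ) :
    coeff (n + 3) (x ^ 2) =
      coeff (n + 3) ((trunc (n + 2) x : R⟦X⟧) ^ 2) + 2 * coeff 1 x * coeff (n + 2) x := by
  set t : R⟦X⟧ := ↑(trunc (n + 2) x)
  set s : R⟦X⟧ := mk fun i => coeff (i + (n + 2)) x
  have hsplit :
      x ^ 2 = t ^ 2 + X ^ (n + 2) * (2 * t * s) + X ^ (n + 3) * (X ^ (n + 1) * s ^ 2) := by
    rw [eq_X_pow_mul_shift_add_trunc (n + 2) x]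
    ring
  rw [hsplit, map_add, map_add, coeff_X_pow_mul', coeff_X_pow_mul']
  simp [t, s, coeff_mul, Finset.Nat.antidiagonal_succ, hx, coeff_trunc, map_ofNat]

end PowerSeries

theorem coeff_substPS (g f : ℝ⟦X⟧) (n : ℕ) :
    coeff n (substPS g f) = ∑ k ∈ range (n + 1), coeff k f * coeff n (g ^ k) :=
  coeff_mk _ _

section substPS

variable {f x : ℝ⟦X⟧}

theorem coeff_one_substPS (hf1 : coeff 1 f = 0) : coeff 1 (substPS x f) = 0 := by
  simp [coeff_substPS, Finset.sum_range_succ, hf1]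

theorem coeff_two_substPS (hf1 : coeff 1 f = 0) (hx : constantCoeff x = 0) :
    coeff 2 (substPS x f) = coeff 2 f * coeff 1 x ^ 2 := by
  simp [coeff_substPS, Finset.sum_range_succ, hf1, coeff_two_sq hx, coeff_one]

theorem coeff_add_three_substPS (hf1 : coeff 1 f = 0) (hx : constantCoeff x = 0) (n : ℕ) :
    coeff (n + 3) (substPS x f) =
      coeff (n + 3) (substPS (trunc (n + 2) x) f) +
        2 * coeff 2 f * coeff 1 x * coeff (n + 2) x := by
  set t : ℝ⟦X⟧ := ↑(trunc (n + 2) x)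
  have hX : X ^ (n + 2) ∣ x - t :=
    ⟨_, sub_eq_iff_eq_add.mpr (eq_X_pow_mul_shift_add_trunc (n + 2) x)⟩
  have hXt : X ∣ t := X_dvd_iff.mpr (by simp [t, coeff_trunc, hx])
  have hdiff : coeff (n + 3) (substPS x f) - coeff (n + 3) (substPS t f) =
      coeff 2 f * coeff (n + 3) (x ^ 2 - t ^ 2) := by
    rw [coeff_substPS, coeff_substPS, ← Finset.sum_sub_distrib]
    simp_rw [← mul_sub, ← map_sub]
    refine Finset.sum_eq_single 2 (fun k _ hk => ?_) (by simp)
    match k, hk with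
    | 0, _ => simp
    | 1, _ => simp [hf1]
    | k + 3, _ =>
      have hk := X_pow_dvd_pow_sub_pow (X_dvd_iff.mpr hx) hXt hX (k + 3)
      rw [X_pow_dvd_iff.mp hk _ (by omega), mul_zero]
  rw [← sub_eq_iff_eq_add', hdiff, map_sub, coeff_add_three_sq hx]
  ring

theorem smul_substPS_eq_X_sq_iff (hf0 : coeff 0 f = 0) (hf1 : coeff 1 f = 0)
    (hx : constantCoeff x = 0) :
    (-2 : ℝ) • substPS x f = X ^ 2 ↔
      -2 * coeff 2 f * coeff 1 x ^ 2 = 1 ∧ ∀ n, coeff (n + 3) (substPS x f) = 0 := by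
  rw [PowerSeries.ext_iff]
  constructor
  · intro h
    refine ⟨?_, fun n => ?_⟩
    · simpa [coeff_two_substPS hf1 hx, mul_assoc] using h 2
    · simpa using h (n + 3)
  · rintro ⟨h2, h⟩ m
    match m with
    | 0 =>
      rw [coeff_smul, coeff_substPS]
      simp [hf0]
    | 1 => simp [coeff_one_substPS hf1]
    | 2 => simp [coeff_two_substPS hf1 hx, ← h2, mul_assoc]
    | n + 3 => simp [h n]

end substPS

/-- With `f₂ = -1/(2a)` and `x₁ = √a`, the degree `n + 3` equation
`[Y^{n+3}] f(x_{<n+2}) + 2 f₂ x₁ x_{n+2} = 0` (see `coeff_add_three_substPS`) solves to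
`x_{n+2} = √a · [Y^{n+3}] f(x_{<n+2})`. -/
noncomputable def solutionCoeff (a : ℝ) (f : ℝ⟦X⟧) : ℕ → ℝ⟦X⟧ → ℝ
  | 0, _ => 0
  | 1, _ => √a
  | n + 2, x => √a * coeff (n + 3) (substPS (trunc (n + 2) x) f)

theorem solutionCoeff_congr (a : ℝ) (f : ℝ⟦X⟧) (m : ℕ) {x y : ℝ⟦X⟧}
    (h : ∀ i < m, coeff i x = coeff i y) : solutionCoeff a f m x = solutionCoeff a f m y := by
  match m with
  | 0 | 1 => rfl
  | n + 2 =>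
    have htrunc : trunc (n + 2) x = trunc (n + 2) y := Polynomial.ext fun i => by
      simp only [coeff_trunc]
      split_ifs with hi
      exacts [h i hi, rfl]
    simp only [solutionCoeff, htrunc]

theorem solution_iff_forall_coeff_eq {a : ℝ} (ha : 0 < a) {f : ℝ⟦X⟧} (hf0 : coeff 0 f = 0)
    (hf1 : coeff 1 f = 0) (hf2 : coeff 2 f = -(1 / (2 * a))) (x : ℝ⟦X⟧) :
    (constantCoeff x = 0 ∧ 0 < coeff 1 x ∧ (-2 : ℝ) • substPS x f = X ^ 2) ↔
      ∀ m, coeff m x = solutionCoeff a f m x := by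
  have hs : √a ^ 2 = a := Real.sq_sqrt ha.le
  constructor
  · rintro ⟨hx0, hx1, heq⟩
    obtain ⟨h2, h⟩ := (smul_substPS_eq_X_sq_iff hf0 hf1 hx0).1 heq
    rw [hf2] at h2
    have hx1' : coeff 1 x = √a := by
      rw [← Real.sqrt_sq hx1.le]
      congr 1
      field_simp at h2
      linarith
    intro m
    match m with
    | 0 => simpa [solutionCoeff] using hx0
    | 1 => exact hx1'
    | n + 2 =>
      have hn := h n
      rw [coeff_add_three_substPS hf1 hx0, hf2, hx1'] at hn
      simp only [solutionCoeff]
      field_simp at hn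
      apply mul_left_cancel₀ ha.ne'
      linear_combination -√a * hn - coeff (n + 2) x * hs
  · intro h
    have hx0 : constantCoeff x = 0 := by simpa [solutionCoeff] using h 0
    have hx1 : coeff 1 x = √a := h 1
    refine ⟨hx0, hx1 ▸ Real.sqrt_pos.2 ha,
      (smul_substPS_eq_X_sq_iff hf0 hf1 hx0).2 ⟨?_, fun n => ?_⟩⟩
    · rw [hf2, hx1, hs]
      field_simp
    · rw [coeff_add_three_substPS hf1 hx0, hf2, hx1, h (n + 2)]
      simp only [solutionCoeff]
      field_simp
      rw [hs]
      ring

/-- For `a > 0` and `V ∈ ℝ[[X]]` with vanishing coefficients in degrees 0, 1, 2,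
set `S = -X²/(2a) + V`. There is exactly one power series `x ∈ ℝ[[Y]]` with zero
constant coefficient and strictly positive linear coefficient with `-2·S(x) = Y²`;
moreover its linear coefficient equals `√a`. -/
theorem stmt0 (a : ℝ) (ha : 0 < a) (V : PowerSeries ℝ)
    (hV0 : PowerSeries.coeff 0 V = 0) (hV1 : PowerSeries.coeff 1 V = 0)
    (hV2 : PowerSeries.coeff 2 V = 0) :
    (∃! x : PowerSeries ℝ,
      PowerSeries.constantCoeff x = 0 ∧ 0 < PowerSeries.coeff 1 x ∧
        (-2 : ℝ) • substPS x (PowerSeries.C (-(1 / (2 * a))) * PowerSeries.X ^ 2 + V) =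
          PowerSeries.X ^ 2) ∧
    ∀ x : PowerSeries ℝ,
      (PowerSeries.constantCoeff x = 0 ∧ 0 < PowerSeries.coeff 1 x ∧
        (-2 : ℝ) • substPS x (PowerSeries.C (-(1 / (2 * a))) * PowerSeries.X ^ 2 + V) =
          PowerSeries.X ^ 2) →
      PowerSeries.coeff 1 x = Real.sqrt a := by
  set f := C (-(1 / (2 * a))) * X ^ 2 + V
  have hf : ∀ k, coeff k f = (if k = 2 then -(1 / (2 * a)) else 0) + coeff k V := by
    intro k
    rw [map_add, coeff_C_mul, coeff_X_pow, mul_ite, mul_one, mul_zero]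
  have hf0 : coeff 0 f = 0 := by simp [hf, hV0]
  have hf1 : coeff 1 f = 0 := by simp [hf, hV1]
  have hf2 : coeff 2 f = -(1 / (2 * a)) := by simp [hf, hV2]
  have hsol := solution_iff_forall_coeff_eq ha hf0 hf1 hf2
  exact ⟨(existsUnique_congr hsol).2
      (existsUnique_forall_coeff_eq _ fun m _ _ => solutionCoeff_congr a f m),
    fun x hx => (hsol x).1 hx 1⟩
end

section
/- Let a > 0 and let V ∈ ℝ[[X]] be a formal power series whose coefficients in degrees 0, 1 and 2 vanish. Define U ∈ ℝ[[X]] by [X^m]U := [X^{m+2}]V (so U represents V/X² and has zero constant coefficient), and let B ∈ ℝ[[T]] be the binomial series of (1−T)^{−1/2}, namely B := Σ_{j≥0} ((2j−1)!!/(2^j j!)) T^j. Then for every n ∈ ℕ, Σ_{k=0}^{2n} a^k ((2(n+k)−1)!!/k!) · [X^{2(n+k)}](V^k) = (2n−1)!! · [X^{2n}]( (B(2a·U))^{2n+1} ), where B(2a·U) denotes the substitution of the series 2a·U (which has zero constant coefficient) into B. Equivalently, the n-th coefficient of the formal integral F[−X²/(2a)+V] equals (2n−1)!! [X^{2n}]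 (X/√(−2S(X)))^{2n+1}, where the square root is the branch whose expansion has positive leading coefficient. -/
/-- `dfac m` is the odd double factorial `(2m-1)!! = (2m)!/(2^m m!)` as a real number. -/
noncomputable def dfac (m : ℕ) : ℝ := ((2 * m).factorial : ℝ) / (2 ^ m * (m.factorial : ℝ))

/-! The series `B` of `(1 - T)^{-1/2}` satisfies `(1 - T) B' = B / 2`, hence
`(1 - T) (B^p)' = (p / 2) B^p`, and this recursion gives
`[T^k] B^{2n+1} = (2(n+k)-1)!! / ((2n-1)!! 2^k k!)`. Substitution being a ring morphism,
`[X^{2n}] B(W)^{2n+1} = Σ_k [T^k] B^{2n+1} · [X^{2n}] W^k`; with `W = 2aU` and `V = X² U`,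
the `k`-th term is the `k`-th term of the left-hand side. -/

open PowerSeries Finset

section Derivative

variable {K : Type*} [Field K] [CharZero K]

lemma coeff_X_mul_derivative (f : PowerSeries K) (m : ℕ) :
    coeff m (X * d⁄dX K f) = m * coeff m f := by
  cases m with
  | zero => simp
  | succ m => rw [coeff_succ_X_mul, coeff_derivative]; push_cast; ring

/-- Solutions of `(1 - X) f' = c f` are the multiples of `(1 - X)^{-c}`. -/
lemma coeff_eq_of_one_sub_X_mul_derivative_eq {f : PowerSeries K} {c : K}
    (hf : (1 - X) * d⁄dX K f = c • f) (m : ℕ) :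
    coeff m f = coeff 0 f * (∏ i ∈ range m, (c + i)) / m.factorial := by
  induction m with
  | zero => simp
  | succ m ih =>
    have hm := congrArg (coeff m) hf
    rw [sub_mul, one_mul, map_sub, coeff_X_mul_derivative, coeff_derivative, coeff_smul,
      smul_eq_mul] at hm
    have hm' : coeff (m + 1) f = (c + m) * coeff m f / (m + 1) := by
      rw [eq_div_iff (Nat.cast_add_one_ne_zero m)]
      linear_combination hm
    rw [hm', ih, prod_range_succ, Nat.factorial_succ]
    push_cast
    field_simp

lemma one_sub_X_mul_derivative_pow {f : PowerSeries K} {c : K}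
    (hf : (1 - X) * d⁄dX K f = c • f) (p : ℕ) :
    (1 - X) * d⁄dX K (f ^ p) = (p * c) • f ^ p := by
  induction p with
  | zero => simp
  | succ p ih =>
    calc (1 - X) * d⁄dX K (f ^ (p + 1))
        = ((1 - X) * d⁄dX K (f ^ p)) * f + f ^ p * ((1 - X) * d⁄dX K f) := by
          rw [pow_succ, Derivation.leibniz, smul_eq_mul, smul_eq_mul]; ring
      _ = ((p + 1 : ℕ) * c) • f ^ (p + 1) := by
          rw [ih, hf, smul_mul_assoc, mul_smul_comm, ← pow_succ, ← add_smul]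
          push_cast; ring_nf

end Derivative

lemma dfac_succ (m : ℕ) : dfac (m + 1) = (2 * m + 1) * dfac m := by
  rw [dfac, dfac, show 2 * (m + 1) = 2 * m + 1 + 1 by ring, Nat.factorial_succ,
    Nat.factorial_succ, Nat.factorial_succ]
  push_cast
  field_simp
  ring

lemma dfac_ne_zero (m : ℕ) : dfac m ≠ 0 := by
  unfold dfac
  positivity

lemma two_pow_mul_prod_range_mul_dfac (n k : ℕ) :
    2 ^ k * (∏ i ∈ range k, ((n : ℝ) + 1 / 2 + i)) * dfac n = dfac (n + k) := by
  induction k with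
  | zero => simp
  | succ k ih =>
    rw [prod_range_succ, ← add_assoc, dfac_succ, ← ih]
    push_cast
    ring

noncomputable def invSqrtOneSub : PowerSeries ℝ :=
  PowerSeries.mk fun j => dfac j / (2 ^ j * j.factorial)

lemma one_sub_X_mul_derivative_invSqrtOneSub :
    (1 - X) * d⁄dX ℝ invSqrtOneSub = (1 / 2 : ℝ) • invSqrtOneSub := by
  ext m
  rw [sub_mul, one_mul, map_sub, coeff_X_mul_derivative, coeff_derivative, coeff_smul]
  simp only [invSqrtOneSub, coeff_mk, dfac_succ, Nat.factorial_succ, smul_eq_mul]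
  have := dfac_ne_zero m
  have : (m.factorial : ℝ) ≠ 0 := by positivity
  push_cast
  field_simp
  ring

lemma coeff_invSqrtOneSub_pow_odd (n k : ℕ) :
    coeff k (invSqrtOneSub ^ (2 * n + 1)) = dfac (n + k) / (dfac n * 2 ^ k * k.factorial) := by
  have hode := one_sub_X_mul_derivative_pow one_sub_X_mul_derivative_invSqrtOneSub (2 * n + 1)
  have h0 : coeff 0 (invSqrtOneSub ^ (2 * n + 1)) = 1 := by
    rw [coeff_zero_eq_constantCoeff_apply, map_pow, ← coeff_zero_eq_constantCoeff_apply]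
    simp [invSqrtOneSub, dfac]
  have := dfac_ne_zero n
  rw [coeff_eq_of_one_sub_X_mul_derivative_eq hode, h0, ← two_pow_mul_prod_range_mul_dfac]
  push_cast
  field_simp

section Substitution

variable {R : Type*} [CommRing R]

lemma coeff_pow_eq_zero_of_lt {W : PowerSeries R} (hW : constantCoeff W = 0) {m k : ℕ}
    (h : m < k) : coeff m (W ^ k) = 0 := by
  obtain ⟨r, hr⟩ := pow_dvd_pow_of_dvd (X_dvd_iff.mpr hW) k
  rw [hr, coeff_X_pow_mul', if_neg (not_le.mpr h)]

lemma coeff_subst_eq_sum_range {W : PowerSeries R} (hW : constantCoeff W = 0)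
    (f : PowerSeries R) (N : ℕ) :
    coeff N (subst W f) = ∑ k ∈ range (N + 1), coeff k f * coeff N (W ^ k) := by
  rw [coeff_subst' (HasSubst.of_constantCoeff_zero' hW)]
  refine finsum_eq_sum_of_support_subset _ fun k hk => ?_
  rw [coe_range, Set.mem_Iio, Nat.lt_succ_iff]
  by_contra! hNk
  exact hk (show coeff k f • coeff N (W ^ k) = 0 by
    rw [coeff_pow_eq_zero_of_lt hW hNk, smul_zero])

lemma coeff_X_pow_mul_pow (U : PowerSeries R) (j k m : ℕ) :
    coeff (m + j * k) ((X ^ j * U) ^ k) = coeff m (U ^ k) := by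
  rw [mul_pow, ← pow_mul, coeff_X_pow_mul]

lemma X_sq_mul_mk_coeff_add_two {V : PowerSeries R} (hV0 : coeff 0 V = 0)
    (hV1 : coeff 1 V = 0) : X ^ 2 * PowerSeries.mk (fun m => coeff (m + 2) V) = V := by
  ext m
  rw [coeff_X_pow_mul']
  split_ifs with hm
  · rw [coeff_mk, Nat.sub_add_cancel hm]
  · interval_cases m
    exacts [hV0.symm, hV1.symm]

end Substitution

lemma substPS_eq_subst {W : PowerSeries ℝ} (hW : constantCoeff W = 0) (f : PowerSeries ℝ) :
    substPS W f = subst W f := by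
  ext N
  rw [substPS, coeff_mk, coeff_subst_eq_sum_range hW]

theorem stmt2_general (a : ℝ) (V : PowerSeries ℝ)
    (hV0 : PowerSeries.coeff 0 V = 0) (hV1 : PowerSeries.coeff 1 V = 0)
    (hV2 : PowerSeries.coeff 2 V = 0) (n : ℕ) :
    ∑ k ∈ Finset.range (2 * n + 1),
        a ^ k * (dfac (n + k) / (k.factorial : ℝ)) *
          PowerSeries.coeff (2 * (n + k)) (V ^ k)
      = dfac n * PowerSeries.coeff (2 * n)
          ((substPS ((2 * a) • PowerSeries.mk fun m => PowerSeries.coeff (m + 2) V)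
              (PowerSeries.mk fun j => dfac j / (2 ^ j * (j.factorial : ℝ)))) ^ (2 * n + 1)) := by
  set U : PowerSeries ℝ := PowerSeries.mk fun m => coeff (m + 2) V
  have hW : constantCoeff ((2 * a) • U) = 0 := by
    rw [← coeff_zero_eq_constantCoeff_apply, coeff_smul, coeff_mk, hV2, smul_zero]
  rw [substPS_eq_subst hW, ← subst_pow (HasSubst.of_constantCoeff_zero' hW),
    coeff_subst_eq_sum_range hW, mul_sum]
  refine sum_congr rfl fun k _ => ?_
  have hVk : coeff (2 * (n + k)) (V ^ k) = coeff (2 * n) (U ^ k) := by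
    rw [← X_sq_mul_mk_coeff_add_two hV0 hV1, mul_add, coeff_X_pow_mul_pow]
  have := dfac_ne_zero n
  rw [← invSqrtOneSub, coeff_invSqrtOneSub_pow_odd, smul_pow, coeff_smul, hVk, smul_eq_mul,
    mul_pow]
  field_simp

/-- With `U` the series with `[X^m]U = [X^{m+2}]V` (i.e. `V/X²`) and
`B = Σ_j ((2j-1)!!/(2^j j!)) T^j` the binomial series of `(1-T)^{-1/2}`, one has
`Σ_{k=0}^{2n} a^k ((2(n+k)-1)!!/k!) [X^{2(n+k)}](V^k) = (2n-1)!! [X^{2n}]((B(2aU))^{2n+1})`. -/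
theorem stmt2 (a : ℝ) (ha : 0 < a) (V : PowerSeries ℝ)
    (hV0 : PowerSeries.coeff 0 V = 0) (hV1 : PowerSeries.coeff 1 V = 0)
    (hV2 : PowerSeries.coeff 2 V = 0) (n : ℕ) :
    ∑ k ∈ Finset.range (2 * n + 1),
        a ^ k * (dfac (n + k) / (k.factorial : ℝ)) *
          PowerSeries.coeff (2 * (n + k)) (V ^ k)
      = dfac n * PowerSeries.coeff (2 * n)
          ((substPS ((2 * a) • PowerSeries.mk fun m => PowerSeries.coeff (m + 2) V)
              (PowerSeries.mk fun j => dfac j / (2 ^ j * (j.factorial : ℝ)))) ^ (2 * n + 1)) :=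
  stmt2_general a V hV0 hV1 hV2 n
end

section
/- For all natural numbers n and k, the identity ((2n−1)!!/2) · binom(k−1/2, 2n) = ((−1)^k · 2^{n−k} · Γ(k+1/2) / (2π)^{3/2}) · Γ(n − k/2 + 1/4) · Γ(n − k/2 + 3/4) / n! holds, where binom(k−1/2, 2n) is the generalized binomial coefficient. -/
/-- The generalized binomial coefficient `binom(x, m) = (1/m!)·∏_{j=0}^{m-1}(x-j)`. -/
noncomputable def genBinom (x : ℝ) (m : ℕ) : ℝ :=
  (∏ j ∈ Finset.range m, (x - (j : ℝ))) / (m.factorial : ℝ)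

open Real Finset

namespace Real

theorem Gamma_add_one_eq_prod_mul_Gamma_sub (x : ℝ) (m : ℕ) (hx : ∀ j < m, x ≠ j) :
    Gamma (x + 1) = (∏ j ∈ range m, (x - j)) * Gamma (x + 1 - m) := by
  induction m with
  | zero => simp
  | succ m ih =>
    rw [ih fun j hj => hx j (by omega), prod_range_succ, mul_assoc,
      show x + 1 - m = (x - m) + 1 by ring, Gamma_add_one (sub_ne_zero.2 (hx m m.lt_add_one))]
    push_cast
    ring_nf

theorem sin_pi_mul_int_add_half (a : ℤ) : sin (π * (a + 1 / 2)) = (-1) ^ a := by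
  rw [show π * (a + 1 / 2) = π / 2 + a * π by ring, sin_add_int_mul_pi, sin_pi_div_two, mul_one]

theorem Gamma_int_add_half_mul_Gamma_half_sub_int (a : ℤ) :
    Gamma (a + 1 / 2) * Gamma (1 / 2 - a) = π * (-1) ^ a := by
  rw [show (1 / 2 - a : ℝ) = 1 - (a + 1 / 2) by ring, Gamma_mul_Gamma_one_sub,
    sin_pi_mul_int_add_half, div_eq_mul_inv, ← inv_zpow, inv_neg_one]

theorem rpow_int_add_half {x : ℝ} (hx : 0 < x) (a : ℤ) :
    x ^ ((a : ℝ) + 1 / 2) = x ^ a * √x := by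
  rw [rpow_add hx, rpow_intCast, sqrt_eq_rpow]

theorem two_mul_pi_rpow_three_halves : (2 * π) ^ ((3 : ℝ) / 2) = 2 * √2 * π * √π := by
  rw [show (3 : ℝ) / 2 = (1 : ℤ) + 1 / 2 by norm_num, rpow_int_add_half (by positivity),
    zpow_one, sqrt_mul zero_le_two]
  ring

theorem Gamma_int_add_half_mul_Gamma_mul_Gamma (a : ℤ) :
    Gamma (a + 1 / 2) * (Gamma ((1 / 2 - a) / 2) * Gamma ((1 / 2 - a) / 2 + 1 / 2))
      = (-1) ^ a * 2 ^ (a - 1) * (2 * π) ^ ((3 : ℝ) / 2) := by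
  rw [Gamma_mul_Gamma_add_half, mul_div_cancel₀ _ two_ne_zero,
    show (1 : ℝ) - (1 / 2 - a) = a + 1 / 2 by ring, rpow_int_add_half two_pos,
    two_mul_pi_rpow_three_halves, zpow_sub_one₀ two_ne_zero]
  linear_combination (2 ^ a * √2 * √π) * Gamma_int_add_half_mul_Gamma_half_sub_int a

end Real

theorem dfac_div_two_mul_genBinom (n : ℕ) (x : ℝ) :
    dfac n / 2 * genBinom x (2 * n)
      = (∏ j ∈ range (2 * n), (x - j)) / (2 ^ (n + 1) * n.factorial) := by
  have : ((2 * n).factorial : ℝ) ≠ 0 := by positivity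
  rw [dfac, genBinom]
  field_simp
  ring

theorem natCast_sub_half_ne_natCast (k j : ℕ) : (k : ℝ) - 1 / 2 ≠ j := fun h => by
  have : 2 * k = 2 * j + 1 := by exact_mod_cast (by linarith : (2 * k : ℝ) = 2 * j + 1)
  omega

/-- For all `n k : ℕ`,
`((2n-1)!!/2)·binom(k-1/2, 2n)
  = ((-1)^k 2^{n-k} Γ(k+1/2)/(2π)^{3/2}) · Γ(n-k/2+1/4) Γ(n-k/2+3/4) / n!`. -/
theorem stmt4 (n k : ℕ) :
    dfac n / 2 * genBinom ((k : ℝ) - 1 / 2) (2 * n)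
      = (-1 : ℝ) ^ k * (2 : ℝ) ^ ((n : ℤ) - (k : ℤ)) * Real.Gamma ((k : ℝ) + 1 / 2) /
            (2 * Real.pi) ^ ((3 : ℝ) / 2) *
          Real.Gamma ((n : ℝ) - (k : ℝ) / 2 + 1 / 4) *
          Real.Gamma ((n : ℝ) - (k : ℝ) / 2 + 3 / 4) / (n.factorial : ℝ) := by
  set a : ℤ := k - 2 * n with ha
  have hprod := Gamma_add_one_eq_prod_mul_Gamma_sub _ (2 * n) fun j _ =>
    natCast_sub_half_ne_natCast k j
  rw [show (k : ℝ) - 1 / 2 + 1 = k + 1 / 2 by ring,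
    show (k : ℝ) + 1 / 2 - (2 * n : ℕ) = a + 1 / 2 by push_cast [ha]; ring] at hprod
  have hgamma := Gamma_int_add_half_mul_Gamma_mul_Gamma a
  rw [show (1 / 2 - a : ℝ) / 2 = n - k / 2 + 1 / 4 by push_cast [ha]; ring,
    show (n - k / 2 + 1 / 4 : ℝ) + 1 / 2 = n - k / 2 + 3 / 4 by ring] at hgamma
  have hsign : (-1 : ℝ) ^ a = (-1) ^ k := by
    rw [ha, zpow_sub₀ (by norm_num), zpow_mul]
    simp
  have htwo : (2 : ℝ) ^ ((n : ℤ) - k) * 2 ^ (a - 1) = (2 ^ (n + 1))⁻¹ := by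
    rw [← zpow_add₀ two_ne_zero, ha,
      show (n : ℤ) - k + (k - 2 * n - 1) = -(n + 1 : ℕ) by push_cast; ring, zpow_neg, zpow_natCast]
  rw [dfac_div_two_mul_genBinom, hprod, ← hsign]
  set P := ∏ j ∈ range (2 * n), ((k : ℝ) - 1 / 2 - j)
  set W := (2 * π) ^ ((3 : ℝ) / 2)
  have hW : W ≠ 0 := by positivity
  calc _ = (-1) ^ a * (-1) ^ a * (2 ^ ((n : ℤ) - k) * 2 ^ (a - 1)) * P * W / W / n.factorial := by
        rw [htwo, ← mul_zpow, neg_one_mul, neg_neg, one_zpow]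
        field_simp
    _ = _ := by linear_combination (-(-1) ^ a * 2 ^ ((n : ℤ) - k) * P / W / n.factorial) * hgamma
end

section
/- For every n ∈ ℕ, the n-th coefficient of the partition function of zero-dimensional φ³-theory, F[−X²/2 + X³/3!], equals (6n−1)!!/((3!)^{2n}(2n)!); explicitly, Σ_{k=0}^{2n} ((2(n+k)−1)!!/k!) · [X^{2(n+k)}]((X³/6)^k) = (6n−1)!!/(36ⁿ (2n)!). -/
/-!
For `V = c X³` the power `V^k` is the monomial `c^k X^{3k}`, so in the `n`-th coefficient of
`F[-X²/2 + V]` only the term with `3k = 2(n + k)`, i.e. `k = 2n`, survives; it equals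
`(6n-1)!! c^{2n} / (2n)!`.
-/

open PowerSeries Finset

/-- `[ħⁿ] F[-X²/2 + V]`, for `V` of order at least 3 (otherwise the truncation at `k = 2n` is not
exact). -/
noncomputable def formalIntegralCoeff (V : PowerSeries ℝ) (n : ℕ) : ℝ :=
  ∑ k ∈ range (2 * n + 1), dfac (n + k) / (k.factorial : ℝ) * coeff (2 * (n + k)) (V ^ k)

theorem PowerSeries.coeff_C_mul_X_pow_pow {R : Type*} [CommSemiring R] (c : R) (d k m : ℕ) :
    coeff m ((C c * X ^ d) ^ k) = if m = d * k then c ^ k else 0 := by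
  rw [mul_pow, ← map_pow, ← pow_mul, coeff_C_mul_X_pow]

theorem formalIntegralCoeff_C_mul_X_pow_three (c : ℝ) (n : ℕ) :
    formalIntegralCoeff (C c * X ^ 3) n = dfac (3 * n) / ((2 * n).factorial : ℝ) * c ^ (2 * n) := by
  rw [formalIntegralCoeff, sum_eq_single_of_mem (2 * n) (self_mem_range_succ _)]
  · rw [coeff_C_mul_X_pow_pow, if_pos (by ring), show n + 2 * n = 3 * n by ring]
  · intro k _ hk
    rw [coeff_C_mul_X_pow_pow, if_neg (by omega), mul_zero]

/-- The `n`-th coefficient of the partition function of zero-dimensional φ³-theory,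
`F[-X²/2 + X³/3!]`, equals `(6n-1)!!/((3!)^{2n}(2n)!)`; here `(6n-1)!!` is written
as `(6n)!/(2^{3n}(3n)!)`. -/
theorem stmt5 (n : ℕ) :
    ∑ k ∈ Finset.range (2 * n + 1),
        dfac (n + k) / (k.factorial : ℝ) *
          PowerSeries.coeff (R := ℝ) (2 * (n + k))
            ((PowerSeries.C (R := ℝ) (1 / 6) * PowerSeries.X ^ 3) ^ k)
      = ((6 * n).factorial : ℝ) / (2 ^ (3 * n) * ((3 * n).factorial : ℝ)) /
          (36 ^ n * ((2 * n).factorial : ℝ)) := by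
  refine (formalIntegralCoeff_C_mul_X_pow_three (1 / 6) n).trans ?_
  have h36 : (1 / 6 : ℝ) ^ (2 * n) = (36 ^ n)⁻¹ := by rw [pow_mul, ← inv_pow]; norm_num
  rw [h36, dfac, show 2 * (3 * n) = 6 * n by ring]
  ring
end

section
/- Let q_n := ((2n−1)!!)²/(2ⁿ n!), the n-th coefficient of the partition function of zero-dimensional quantum electrodynamics (equivalently, of the zero-dimensional sine-Gordon model). Then for every R ∈ ℕ, q_n − (1/π) · Σ_{k=0}^{R−1} (−1)^k q_k 2^{n−k} Γ(n−k) = O( 2ⁿ Γ(n−R) ) as n → ∞. (The two dominant saddle points of −sin²(x)/2 at x = ±π/2, both with value −1/2, contribute equally, producing the prefactor 1/π.) -/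
/-- `q_n = ((2n-1)!!)²/(2^n n!)`, the `n`-th coefficient of the partition function of
zero-dimensional QED (equivalently, of the zero-dimensional sine-Gordon model). -/
noncomputable def qQED (n : ℕ) : ℝ := (dfac n) ^ 2 / (2 ^ n * (n.factorial : ℝ))

/-!
Write `u_n = q_n / 2^n` and `P_k(n) = Γ(n-k)/Γ(n)`. Dividing by `2^n Γ(n)/π`, the claim says that
the remainder `e_R(n) = π u_n/Γ(n) - Σ_{k<R} (-1)^k u_k P_k(n)` is `O(P_R(n))`. Consecutive terms
of `π u_n/Γ(n)` have ratio `ρ_n = (2n+1)²/(4n(n+1)) ≥ 1`, and the sum telescopes so that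
`e_R(n+1) = ρ_n e_R(n) - (-1)^R c_R(n)` with `c_R(n) ≥ 0`. Hence if `(-1)^R e_R(n)` were ever
negative it would stay below that negative value, whereas Wallis' product gives `π u_n/Γ(n) → 1`
and so `e_R(n) → 0^R`. Thus `(-1)^R e_R ≥ 0` for every `R`, and, as for an alternating series,
`e_R = e_{R+1} + (-1)^R u_R P_R` traps `|e_R|` below `u_R P_R`.
-/

open Filter Topology Real Finset

theorem nonneg_of_tendsto_of_le_mul {e ρ : ℕ → ℝ} {N : ℕ} {L : ℝ} (hL : 0 ≤ L)
    (he : Tendsto e atTop (𝓝 L)) (hρ : ∀ n ≥ N, 1 ≤ ρ n)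
    (hrec : ∀ n ≥ N, e (n + 1) ≤ ρ n * e n) : ∀ n ≥ N, 0 ≤ e n := by
  intro n hn
  by_contra! hneg
  have hdecr : ∀ m ≥ n, e m ≤ e n := by
    intro m hm
    induction m, hm using Nat.le_induction with
    | base => exact le_rfl
    | succ m hm ih =>
      have := hrec m (hn.trans hm)
      nlinarith [hρ m (hn.trans hm)]
  have : L ≤ e n := le_of_tendsto he (eventually_atTop.2 ⟨n, hdecr⟩)
  linarith

theorem neg_one_pow_sq {M : Type*} [Monoid M] [HasDistribNeg M] (n : ℕ) :
    ((-1 : M) ^ n) ^ 2 = 1 := by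
  rw [← pow_mul, mul_comm, pow_mul, neg_one_sq, one_pow]

namespace ZeroDimQED

noncomputable def qScaled (n : ℕ) : ℝ := qQED n / 2 ^ n

theorem qQED_eq_two_pow_mul (n : ℕ) : qQED n = 2 ^ n * qScaled n := by
  rw [qScaled]; field_simp

theorem qScaled_eq (n : ℕ) :
    qScaled n = ((2 * n).factorial : ℝ) ^ 2 / (2 ^ (4 * n) * (n.factorial : ℝ) ^ 3) := by
  simp only [qScaled, qQED, dfac]
  field_simp
  ring

theorem qScaled_zero : qScaled 0 = 1 := by simp [qScaled_eq]

theorem qScaled_pos (n : ℕ) : 0 < qScaled n := by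
  rw [qScaled_eq]; positivity

theorem qScaled_succ (n : ℕ) :
    4 * (n + 1) * qScaled (n + 1) = (2 * n + 1) ^ 2 * qScaled n := by
  rw [qScaled_eq, qScaled_eq, show 2 * (n + 1) = 2 * n + 1 + 1 by ring, Nat.factorial_succ,
    Nat.factorial_succ, Nat.factorial_succ, show 4 * (n + 1) = 4 * n + 4 by ring, pow_add]
  push_cast
  field_simp
  ring

noncomputable def normalizedQ (n : ℕ) : ℝ := π * qScaled n / Gamma n

theorem normalizedQ_eq_wallis {n : ℕ} (hn : n ≠ 0) :
    normalizedQ n = π / Wallis.W n * (n / (2 * n + 1)) := by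
  have hΓ : Gamma n = n.factorial / n := by
    rw [eq_div_iff (by positivity), mul_comm, ← Gamma_add_one (by positivity),
      Gamma_nat_eq_factorial]
  rw [normalizedQ, qScaled_eq, Wallis.W_eq_factorial_ratio, hΓ]
  field_simp

theorem tendsto_normalizedQ : Tendsto normalizedQ atTop (𝓝 1) := by
  have h := (tendsto_const_nhds (x := π)).div Wallis.tendsto_W_nhds_pi_div_two
    (by positivity) |>.mul Stirling.tendsto_self_div_two_mul_self_add_one
  rw [show π / (π / 2) * (1 / 2) = 1 by field_simp] at h
  exact h.congr' (eventually_atTop.2 ⟨1, fun n hn => (normalizedQ_eq_wallis (by omega)).symm⟩)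

noncomputable def ratio (n : ℕ) : ℝ := (2 * n + 1) ^ 2 / (4 * n * (n + 1))

theorem one_le_ratio {n : ℕ} (hn : n ≠ 0) : 1 ≤ ratio n := by
  rw [ratio, one_le_div (by positivity)]
  nlinarith

theorem normalizedQ_succ {n : ℕ} (hn : n ≠ 0) :
    normalizedQ (n + 1) = ratio n * normalizedQ n := by
  have hΓ : Gamma n ≠ 0 := (Gamma_pos_of_pos (by positivity)).ne'
  have hq := qScaled_succ n
  rw [normalizedQ, normalizedQ, ratio, Nat.cast_succ, Gamma_add_one (by positivity)]
  field_simp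
  linear_combination hq

noncomputable def gammaRatio (k n : ℕ) : ℝ := Gamma (n - k) / Gamma n

theorem gammaRatio_pos {k n : ℕ} (h : k < n) : 0 < gammaRatio k n := by
  have : (k : ℝ) < n := by exact_mod_cast h
  unfold gammaRatio
  exact div_pos (Gamma_pos_of_pos (by linarith)) (Gamma_pos_of_pos (by linarith))

theorem Gamma_natCast_sub_succ {k n : ℕ} (h : k + 1 < n) :
    Gamma ((n : ℝ) - k) = (n - (k + 1)) * Gamma (n - (k + 1)) := by
  have : (k : ℝ) + 1 < n := by exact_mod_cast h
  rw [← Gamma_add_one (by linarith)]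
  ring_nf

theorem gammaRatio_succ {k n : ℕ} (h : k + 1 < n) :
    gammaRatio (k + 1) n = gammaRatio k n / (n - (k + 1)) := by
  have : (k : ℝ) + 1 < n := by exact_mod_cast h
  rw [gammaRatio, gammaRatio, Nat.cast_succ, Gamma_natCast_sub_succ h]
  field_simp [show (n : ℝ) - (k + 1) ≠ 0 by linarith]

theorem tendsto_gammaRatio (k : ℕ) : Tendsto (gammaRatio k) atTop (𝓝 (0 ^ k)) := by
  induction k with
  | zero =>
    refine tendsto_const_nhds.congr' (eventually_atTop.2 ⟨1, fun n hn => ?_⟩)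
    have : Gamma n ≠ 0 := (Gamma_pos_of_pos (by positivity)).ne'
    simp [gammaRatio, this]
  | succ k ih =>
    have hinv : Tendsto (fun n : ℕ => ((n : ℝ) - (k + 1))⁻¹) atTop (𝓝 0) :=
      tendsto_inv_atTop_zero.comp
        (tendsto_atTop_add_const_right _ _ tendsto_natCast_atTop_atTop)
    rw [pow_succ]
    refine (ih.mul hinv).congr' (eventually_atTop.2 ⟨k + 2, fun n hn => ?_⟩)
    rw [gammaRatio_succ (by omega), div_eq_mul_inv]

noncomputable def telescopingTerm (j n : ℕ) : ℝ := j * qScaled j * gammaRatio j (n + 1) / (n + 1)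

theorem qScaled_mul_ratio_sub {k n : ℕ} (h : k < n) :
    qScaled k * (ratio n * gammaRatio k n - gammaRatio k (n + 1)) =
      telescopingTerm k n + telescopingTerm (k + 1) n := by
  have hkn : (k : ℝ) < n := by exact_mod_cast h
  have hΓ : Gamma n ≠ 0 := (Gamma_pos_of_pos (by linarith)).ne'
  have hΓk : Gamma (n - k) ≠ 0 := (Gamma_pos_of_pos (by linarith)).ne'
  have hsucc : ((n + 1 : ℕ) : ℝ) - (k + 1 : ℕ) = n - k := by push_cast; ring
  have hΓsucc : Gamma ((n + 1 : ℕ) - k) = (n - k) * Gamma (n - k) := by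
    rw [Nat.cast_succ, show (n : ℝ) + 1 - k = n - k + 1 by ring, Gamma_add_one (by linarith)]
  have hΓn : Gamma (n + 1 : ℕ) = n * Gamma n := by
    rw [Nat.cast_succ, Gamma_add_one (by linarith)]
  have hq := qScaled_succ k
  simp only [telescopingTerm, gammaRatio, ratio]
  rw [hsucc, hΓsucc, hΓn]
  field_simp [show (n : ℝ) ≠ 0 by linarith]
  push_cast
  linear_combination -hq

theorem telescopingTerm_nonneg {j n : ℕ} (h : j ≤ n) : 0 ≤ telescopingTerm j n := by
  have := (gammaRatio_pos (Nat.lt_succ_of_le h)).le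
  have := (qScaled_pos j).le
  unfold telescopingTerm
  positivity

noncomputable def partialSum (R n : ℕ) : ℝ := ∑ k ∈ range R, (-1) ^ k * qScaled k * gammaRatio k n

theorem ratio_mul_partialSum_sub {R n : ℕ} (h : R ≤ n) :
    ratio n * partialSum R n - partialSum R (n + 1) = -((-1) ^ R * telescopingTerm R n) :=
  calc ratio n * partialSum R n - partialSum R (n + 1)
      = ∑ k ∈ range R,
          (-1) ^ k * (qScaled k * (ratio n * gammaRatio k n - gammaRatio k (n + 1))) := by
        simp only [partialSum, mul_sum, ← sum_sub_distrib]
        exact sum_congr rfl fun k _ => by ring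
    _ = ∑ k ∈ range R,
          ((-1) ^ k * telescopingTerm k n - (-1) ^ (k + 1) * telescopingTerm (k + 1) n) :=
        sum_congr rfl fun k hk => by
          rw [qScaled_mul_ratio_sub (by have := mem_range.1 hk; omega)]
          ring
    _ = -((-1) ^ R * telescopingTerm R n) := by
        rw [sum_range_sub']
        simp [telescopingTerm]

noncomputable def remainder (R n : ℕ) : ℝ := normalizedQ n - partialSum R n

theorem remainder_succ {R n : ℕ} (h : R ≤ n) (hn : n ≠ 0) :
    remainder R (n + 1) = ratio n * remainder R n - (-1) ^ R * telescopingTerm R n := by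
  have := ratio_mul_partialSum_sub h
  rw [remainder, remainder, normalizedQ_succ hn]
  linarith

theorem tendsto_remainder (R : ℕ) : Tendsto (remainder R) atTop (𝓝 (0 ^ R)) := by
  have hsum : Tendsto (partialSum R) atTop (𝓝 (∑ k ∈ range R, (-1) ^ k * qScaled k * 0 ^ k)) :=
    tendsto_finsetSum _ fun k _ => (tendsto_gammaRatio k).const_mul _
  have hlim : ∑ k ∈ range R, (-1) ^ k * qScaled k * (0 : ℝ) ^ k = 1 - 0 ^ R := by
    cases R <;> simp [sum_range_succ', qScaled_zero]
  have := tendsto_normalizedQ.sub hsum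
  rwa [hlim, sub_sub_cancel] at this

theorem neg_one_pow_mul_remainder_nonneg (R : ℕ) :
    ∀ n ≥ R + 1, 0 ≤ (-1) ^ R * remainder R n := by
  refine nonneg_of_tendsto_of_le_mul (ρ := ratio) (by simp [← mul_pow])
    ((tendsto_remainder R).const_mul _) (fun n hn => one_le_ratio (by omega)) fun n hn => ?_
  rw [remainder_succ (by omega) (by omega)]
  linear_combination (-telescopingTerm R n) * neg_one_pow_sq (M := ℝ) R +
    telescopingTerm_nonneg (j := R) (n := n) (by omega)

theorem abs_remainder_le {R n : ℕ} (h : R + 2 ≤ n) :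
    |remainder R n| ≤ qScaled R * gammaRatio R n := by
  have hR := neg_one_pow_mul_remainder_nonneg R n (by omega)
  have hR' := neg_one_pow_mul_remainder_nonneg (R + 1) n (by omega)
  have hsplit : remainder (R + 1) n = remainder R n - (-1) ^ R * qScaled R * gammaRatio R n := by
    simp only [remainder, partialSum, sum_range_succ]
    ring
  rw [hsplit] at hR'
  calc |remainder R n| = (-1) ^ R * remainder R n := by
        rw [← abs_of_nonneg hR, abs_mul, abs_pow, abs_neg, abs_one, one_pow, one_mul]
    _ ≤ qScaled R * gammaRatio R n := by
        linear_combination hR' + (qScaled R * gammaRatio R n) * neg_one_pow_sq (M := ℝ) R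

theorem qQED_sub_sum_eq (R : ℕ) {n : ℕ} (hn : n ≠ 0) :
    qQED n - 1 / π * ∑ k ∈ range R,
        (-1 : ℝ) ^ k * qQED k * (2 : ℝ) ^ ((n : ℤ) - (k : ℤ)) * Gamma ((n : ℝ) - (k : ℝ)) =
      2 ^ n * Gamma n / π * remainder R n := by
  have hΓ : Gamma n ≠ 0 := (Gamma_pos_of_pos (by positivity)).ne'
  have hsum : ∑ k ∈ range R,
      (-1 : ℝ) ^ k * qQED k * (2 : ℝ) ^ ((n : ℤ) - (k : ℤ)) * Gamma ((n : ℝ) - (k : ℝ)) =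
        2 ^ n * ∑ k ∈ range R, (-1) ^ k * qScaled k * Gamma (n - k) := by
    rw [mul_sum]
    refine sum_congr rfl fun k _ => ?_
    rw [qQED_eq_two_pow_mul, zpow_sub₀ two_ne_zero, zpow_natCast, zpow_natCast]
    field_simp
  rw [hsum, remainder, normalizedQ, partialSum, qQED_eq_two_pow_mul]
  simp only [gammaRatio, mul_div_assoc', ← sum_div]
  field_simp

end ZeroDimQED

open ZeroDimQED

/-- For every `R`,
`q_n - (1/π) Σ_{k<R} (-1)^k q_k 2^{n-k} Γ(n-k) = O(2^n Γ(n-R))` as `n → ∞`. -/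
theorem stmt10 (R : ℕ) :
    (fun n : ℕ => qQED n - 1 / Real.pi *
        ∑ k ∈ Finset.range R,
          (-1 : ℝ) ^ k * qQED k * (2 : ℝ) ^ ((n : ℤ) - (k : ℤ)) *
            Real.Gamma ((n : ℝ) - (k : ℝ)))
      =O[Filter.atTop] fun n : ℕ => (2 : ℝ) ^ n * Real.Gamma ((n : ℝ) - (R : ℝ)) := by
  refine Asymptotics.IsBigO.of_bound (qScaled R / π) ?_
  filter_upwards [eventually_ge_atTop (R + 2)] with n hn
  have hΓ : 0 < Gamma n := Gamma_pos_of_pos (by exact_mod_cast (by omega : 0 < n))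
  have hΓR : 0 < Gamma (n - R) := Gamma_pos_of_pos (by
    rw [sub_pos]; exact_mod_cast (by omega : R < n))
  rw [qQED_sub_sum_eq R (by omega), norm_mul, norm_eq_abs, norm_eq_abs, norm_eq_abs,
    abs_of_pos (by positivity : (0 : ℝ) < 2 ^ n * Gamma n / π),
    abs_of_pos (by positivity : (0 : ℝ) < 2 ^ n * Gamma (n - R))]
  calc 2 ^ n * Gamma n / π * |remainder R n|
      ≤ 2 ^ n * Gamma n / π * (qScaled R * gammaRatio R n) := by
        gcongr; exact abs_remainder_le hn
    _ = qScaled R / π * (2 ^ n * Gamma (n - R)) := by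
        rw [gammaRatio]; field_simp
end

section
/- Let E := Σ_{m≥0} (−X)^m/m! ∈ ℝ[[X]] (the formal power series of e^{−X}) and V := X²/2 − (1−E)²/2, a formal power series of order 3. Then for every n ∈ ℕ, Σ_{k=0}^{2n} ((2(n+k)−1)!!/k!) · [X^{2(n+k)}](V^k) = (2n−1)!!; that is, F[−(1−e^{−X})²/2](ħ) = Σ_{n≥0} (2n−1)!! ħⁿ. (In particular, the exponential growth rate of these coefficients is not governed by the value of the action at its saddle points, since the curve y²/2 = (1−e^{−x})²/2 is singular there.) -/
/-- The formal power series of `e^{-X}`, namely `Σ_{m≥0} (-X)^m/m!`. -/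
noncomputable def EPS : PowerSeries ℝ :=
  PowerSeries.mk fun m => (-1 : ℝ) ^ m / (m.factorial : ℝ)

open PowerSeries Finset

lemma dfac_zero : dfac 0 = 1 := by simp [dfac]

lemma X_pow_dvd_derivative {R : Type*} [CommSemiring R] {f : R⟦X⟧} {n : ℕ}
    (h : X ^ (n + 1) ∣ f) : X ^ n ∣ d⁄dX R f :=
  X_pow_dvd_iff.mpr fun i hi => by
    rw [coeff_derivative, X_pow_dvd_iff.mp h (i + 1) (by omega), zero_mul]

/-- Gaussian integration by parts `⟨x g⟩ = ⟨g'⟩`, on the monomial of degree `2j + 1` of `g`. -/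
lemma dfac_succ_mul_coeff_X_mul (j : ℕ) (g : ℝ⟦X⟧) :
    dfac (j + 1) * coeff (2 * j + 2) (X * g) = dfac j * coeff (2 * j) (d⁄dX ℝ g) := by
  rw [coeff_succ_X_mul, coeff_derivative, dfac_succ]
  push_cast
  ring

section FormalIntegral

variable (V : ℝ⟦X⟧)

noncomputable def formalIntegralTerm (f : ℝ⟦X⟧) (n k : ℕ) : ℝ :=
  dfac (n + k) / k.factorial * coeff (2 * (n + k)) (f * V ^ k)

noncomputable def formalIntegral (f : ℝ⟦X⟧) (n : ℕ) : ℝ :=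
  ∑ k ∈ range (2 * n + 1), formalIntegralTerm V f n k

variable {V}

lemma formalIntegral_add (f g : ℝ⟦X⟧) (n : ℕ) :
    formalIntegral V (f + g) n = formalIntegral V f n + formalIntegral V g n := by
  simp [formalIntegral, formalIntegralTerm, add_mul, mul_add, sum_add_distrib]

lemma formalIntegral_sub (f g : ℝ⟦X⟧) (n : ℕ) :
    formalIntegral V (f - g) n = formalIntegral V f n - formalIntegral V g n := by
  simp [formalIntegral, formalIntegralTerm, sub_mul, mul_sub, sum_sub_distrib]

lemma formalIntegralTerm_eq_zero (hV : X ^ 3 ∣ V) {f : ℝ⟦X⟧} {a n k : ℕ} (hf : X ^ a ∣ f)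
    (h : 2 * (n + k) < a + 3 * k) : formalIntegralTerm V f n k = 0 := by
  have hdvd : X ^ (a + 3 * k) ∣ f * V ^ k := by
    rw [pow_add, pow_mul]
    exact mul_dvd_mul hf (pow_dvd_pow_of_dvd hV k)
  rw [formalIntegralTerm, X_pow_dvd_iff.mp hdvd _ h, mul_zero]

lemma sum_range_mul_formalIntegralTerm (hV : X ^ 3 ∣ V) (c : ℕ → ℝ) (f : ℝ⟦X⟧) {n M : ℕ}
    (hM : 2 * n + 1 ≤ M) :
    ∑ k ∈ range M, c k * formalIntegralTerm V f n k
      = ∑ k ∈ range (2 * n + 1), c k * formalIntegralTerm V f n k :=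
  eventually_constant_sum (fun k hk => by
    rw [formalIntegralTerm_eq_zero hV (one_dvd f) (a := 0) (by omega), mul_zero]) hM

lemma formalIntegralTerm_X_mul_succ_zero (f : ℝ⟦X⟧) (m : ℕ) :
    formalIntegralTerm V (X * f) (m + 1) 0 = formalIntegralTerm V (d⁄dX ℝ f) m 0 := by
  simpa [formalIntegralTerm, mul_add, mul_assoc] using dfac_succ_mul_coeff_X_mul m f

lemma formalIntegralTerm_X_mul_succ_succ (f : ℝ⟦X⟧) (m k : ℕ) :
    formalIntegralTerm V (X * f) (m + 1) (k + 1)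
      = formalIntegralTerm V (d⁄dX ℝ f) m (k + 1)
        + formalIntegralTerm V (d⁄dX ℝ V * f) (m + 1) k := by
  have hibp := dfac_succ_mul_coeff_X_mul (m + k + 1) (f * V ^ (k + 1))
  rw [Derivation.leibniz, Derivation.leibniz_pow, add_tsub_cancel_right] at hibp
  simp only [smul_eq_mul, nsmul_eq_mul, ← map_natCast (C (R := ℝ)), mul_left_comm f (C _),
    map_add, coeff_C_mul] at hibp
  simp only [formalIntegralTerm, Nat.factorial_succ]
  rw [show m + 1 + (k + 1) = m + k + 1 + 1 by ring, show m + (k + 1) = m + k + 1 by ring,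
    show m + 1 + k = m + k + 1 by ring, show 2 * (m + k + 1 + 1) = 2 * (m + k + 1) + 2 by ring,
    mul_assoc, div_mul_eq_mul_div, hibp, mul_comm (V ^ (k + 1)),
    show f * (V ^ k * d⁄dX ℝ V) = d⁄dX ℝ V * f * V ^ k by ring]
  push_cast
  field_simp
  ring

lemma formalIntegralTerm_X_sq_mul_succ (g : ℝ⟦X⟧) (m k : ℕ) :
    formalIntegralTerm V (X ^ 2 * g) (m + 1) k
      = (2 * (m + k) + 1) * formalIntegralTerm V g m k := by
  rw [formalIntegralTerm, formalIntegralTerm, show m + 1 + k = m + k + 1 by ring,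
    show 2 * (m + k + 1) = 2 * (m + k) + 2 by ring, mul_assoc, coeff_X_pow_mul, dfac_succ]
  push_cast
  ring

lemma formalIntegralTerm_mul_succ (g : ℝ⟦X⟧) (m k : ℕ) :
    formalIntegralTerm V (V * g) (m + 1) k = (k + 1) * formalIntegralTerm V g m (k + 1) := by
  rw [formalIntegralTerm, formalIntegralTerm, show m + 1 + k = m + (k + 1) by ring,
    show V * g * V ^ k = g * V ^ (k + 1) by ring, Nat.factorial_succ]
  push_cast
  field_simp

lemma formalIntegral_eq_sum_range (hV : X ^ 3 ∣ V) (f : ℝ⟦X⟧) {n M : ℕ} (hM : 2 * n + 1 ≤ M) :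
    formalIntegral V f n = ∑ k ∈ range M, formalIntegralTerm V f n k := by
  simpa [formalIntegral] using (sum_range_mul_formalIntegralTerm hV (fun _ => 1) f hM).symm

lemma formalIntegral_X_mul_succ (hV : X ^ 3 ∣ V) (f : ℝ⟦X⟧) (m : ℕ) :
    formalIntegral V (X * f) (m + 1)
      = formalIntegral V (d⁄dX ℝ f) m + formalIntegral V (d⁄dX ℝ V * f) (m + 1) := by
  have hlast : formalIntegralTerm V (d⁄dX ℝ V * f) (m + 1) (2 * (m + 1)) = 0 :=
    formalIntegralTerm_eq_zero hV (dvd_mul_of_dvd_left (X_pow_dvd_derivative hV) f) (by omega)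
  rw [formalIntegral, sum_range_succ', formalIntegralTerm_X_mul_succ_zero]
  simp only [formalIntegralTerm_X_mul_succ_succ, sum_add_distrib]
  rw [add_right_comm, ← sum_range_succ' (formalIntegralTerm V (d⁄dX ℝ f) m),
    ← formalIntegral_eq_sum_range hV _ (by omega)]
  congr 1
  rw [formalIntegral, sum_range_succ, hlast, add_zero]

lemma formalIntegral_X_sub_derivative_mul_succ (hV : X ^ 3 ∣ V) (f : ℝ⟦X⟧) (m : ℕ) :
    formalIntegral V ((X - d⁄dX ℝ V) * f) (m + 1) = formalIntegral V (d⁄dX ℝ f) m := by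
  rw [sub_mul, formalIntegral_sub, formalIntegral_X_mul_succ hV, add_sub_cancel_right]

lemma formalIntegral_X_sq_sub_two_mul_mul_succ (hV : X ^ 3 ∣ V) (g : ℝ⟦X⟧) (m : ℕ) :
    formalIntegral V ((X ^ 2 - 2 * V) * g) (m + 1) = (2 * m + 1) * formalIntegral V g m := by
  have hX : formalIntegral V (X ^ 2 * g) (m + 1)
      = ∑ k ∈ range (2 * m + 1), (2 * (m + k) + 1 : ℝ) * formalIntegralTerm V g m k := by
    simp only [formalIntegral, formalIntegralTerm_X_sq_mul_succ]
    exact sum_range_mul_formalIntegralTerm hV _ g (by omega)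
  have hVg : formalIntegral V (V * g) (m + 1)
      = ∑ k ∈ range (2 * m + 1), (k : ℝ) * formalIntegralTerm V g m k := by
    rw [← sum_range_mul_formalIntegralTerm hV _ g (M := 2 * (m + 1) + 2) (by omega),
      sum_range_succ']
    simp [formalIntegral, formalIntegralTerm_mul_succ]
  rw [sub_mul, mul_assoc, two_mul, formalIntegral_sub, formalIntegral_add, hX, hVg, formalIntegral,
    mul_sum, ← sum_add_distrib, ← sum_sub_distrib]
  exact sum_congr rfl fun k _ => by ring

end FormalIntegral

lemma EPS_mul_exp : EPS * exp ℝ = 1 := by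
  have hEPS : EPS = evalNegHom (exp ℝ) := by
    ext m
    simp [EPS, evalNegHom, coeff_exp, div_eq_mul_inv]
  rw [hEPS, mul_comm, exp_mul_exp_neg_eq_one]

lemma derivative_EPS : d⁄dX ℝ EPS = -EPS := by
  ext m
  simp only [EPS, coeff_derivative, coeff_mk, map_neg, Nat.factorial_succ, pow_succ]
  push_cast
  field_simp

noncomputable def morseInteraction : ℝ⟦X⟧ :=
  C (1 / 2 : ℝ) * X ^ 2 - C (1 / 2 : ℝ) * (1 - EPS) ^ 2

lemma C_half_mul_two : C (1 / 2 : ℝ) * 2 = 1 := by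
  rw [← map_ofNat C 2, ← map_mul]
  norm_num

lemma X_sq_sub_two_mul_morseInteraction : X ^ 2 - 2 * morseInteraction = (1 - EPS) ^ 2 := by
  rw [morseInteraction]
  linear_combination (-(X ^ 2 - (1 - EPS) ^ 2) : ℝ⟦X⟧) * C_half_mul_two

lemma X_sub_derivative_morseInteraction : X - d⁄dX ℝ morseInteraction = (1 - EPS) * EPS := by
  simp only [morseInteraction, map_sub, Derivation.leibniz, derivative_pow, derivative_C,
    derivative_X, derivative_one, derivative_EPS, smul_eq_mul]
  linear_combination (-(X - (1 - EPS) * EPS) : ℝ⟦X⟧) * C_half_mul_two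

lemma X_pow_three_dvd_morseInteraction : X ^ 3 ∣ morseInteraction :=
  X_pow_dvd_iff.mpr fun i hi => by
    interval_cases i <;>
      simp [morseInteraction, EPS, sq, coeff_mul, Nat.sum_antidiagonal_eq_sum_range_succ_mk,
        sum_range_succ, coeff_one, Nat.factorial]

lemma formalIntegral_morseInteraction_EPS_succ (j : ℕ) :
    formalIntegral morseInteraction EPS (j + 1) = 0 := by
  have hV := X_pow_three_dvd_morseInteraction
  have hsd := formalIntegral_X_sub_derivative_mul_succ hV (1 - EPS) (j + 1)
  rw [X_sub_derivative_morseInteraction,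
    show (1 - EPS) * EPS * (1 - EPS) = (1 - EPS) ^ 2 * EPS by ring,
    ← X_sq_sub_two_mul_morseInteraction, formalIntegral_X_sq_sub_two_mul_mul_succ hV, map_sub,
    derivative_one, derivative_EPS, zero_sub, neg_neg] at hsd
  have htwice : 2 * ((j + 1 : ℕ) : ℝ) * formalIntegral morseInteraction EPS (j + 1) = 0 := by
    linear_combination hsd
  exact (mul_eq_zero.mp htwice).resolve_left (by positivity)

lemma formalIntegral_morseInteraction_one_succ (j : ℕ) :
    formalIntegral morseInteraction 1 (j + 1)
      = (2 * j + 1) * formalIntegral morseInteraction 1 j := by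
  have hV := X_pow_three_dvd_morseInteraction
  have hexp := formalIntegral_X_sub_derivative_mul_succ hV (exp ℝ) j
  have hexp_sub_one := formalIntegral_X_sub_derivative_mul_succ hV (exp ℝ - 1) j
  have hsq := formalIntegral_X_sq_sub_two_mul_mul_succ hV 1 j
  rw [X_sub_derivative_morseInteraction, derivative_exp,
    show (1 - EPS) * EPS * exp ℝ = 1 - EPS by linear_combination (1 - EPS) * EPS_mul_exp] at hexp
  rw [X_sub_derivative_morseInteraction, map_sub, derivative_one, sub_zero, derivative_exp,
    show (1 - EPS) * EPS * (exp ℝ - 1) = (1 - EPS) ^ 2 by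
      linear_combination (1 - EPS) * EPS_mul_exp] at hexp_sub_one
  rw [X_sq_sub_two_mul_morseInteraction, mul_one] at hsq
  rw [← hsq, hexp_sub_one, ← hexp, formalIntegral_sub, formalIntegral_morseInteraction_EPS_succ,
    sub_zero]

lemma formalIntegral_morseInteraction_one (n : ℕ) :
    formalIntegral morseInteraction 1 n = dfac n := by
  induction n with
  | zero => simp [formalIntegral, formalIntegralTerm, dfac_zero]
  | succ j ih => rw [formalIntegral_morseInteraction_one_succ, ih, dfac_succ]

/-- With `V = X²/2 - (1-e^{-X})²/2` (a series of order 3), the `n`-th coefficient of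
`F[-(1-e^{-X})²/2]` equals `(2n-1)!!`. -/
theorem stmt11 (n : ℕ) :
    ∑ k ∈ Finset.range (2 * n + 1),
        dfac (n + k) / (k.factorial : ℝ) *
          PowerSeries.coeff (R := ℝ) (2 * (n + k))
            ((PowerSeries.C (R := ℝ) (1 / 2) * PowerSeries.X ^ 2 -
                PowerSeries.C (R := ℝ) (1 / 2) * (1 - EPS) ^ 2) ^ k)
      = dfac n := by
  simpa [formalIntegral, formalIntegralTerm, morseInteraction] using
    formalIntegral_morseInteraction_one n
end
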